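/- Let X be a right A-Galois object. Then: (i) α(δ_X) = δ_X ⊗ δ, where δ is the modular element of A; (ii) β(δ) = δ_X⁻¹ ⊗ δ_X; (iii) σ_X(δ_X) = τ⁻¹·δ_X, where τ is the scaling constant of A. -/

import Mathlib

open TensorProduct

noncomputable section

variable (k : Type*) [Field k]

/-- Apply a linear functional to the second tensor factor. -/
def applySnd {M N : Type*} [AddCommGroup M] [Module k M]
    [AddCommGroup N] [Module k N] (f : N →ₗ[k] k) : M ⊗[k] N →ₗ[k] M :=
  (TensorProduct.rid k M).toLinearMap ∘ₗ LinearMap.lTensor M f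

/-- Apply a linear functional to the first tensor factor. -/
def applyFst {M N : Type*} [AddCommGroup M] [Module k M]
    [AddCommGroup N] [Module k N] (f : M →ₗ[k] k) : M ⊗[k] N →ₗ[k] N :=
  (TensorProduct.lid k N).toLinearMap ∘ₗ LinearMap.rTensor N f

variable (A X : Type*) [Ring A] [HopfAlgebra k A] [Ring X] [Algebra k X]

/-- The Galois map `V : X ⊗ X → X ⊗ A`, `x ⊗ y ↦ (x ⊗ 1) * α y`. -/
def galoisV (α : X →ₐ[k] X ⊗[k] A) : X ⊗[k] X →ₗ[k] X ⊗[k] A :=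
  LinearMap.mul' k (X ⊗[k] A) ∘ₗ
    TensorProduct.map ((TensorProduct.mk k X A).flip 1) α.toLinearMap

/-- A Hopf algebra with bijective antipode and faithful left integral `φ`,
together with a right Galois coaction `α` on `X` with trivial coinvariants. -/
structure GaloisContext where
  φ : A →ₗ[k] k
  φ_ne : φ ≠ 0
  φ_integral : ∀ a : A, applySnd k φ (Coalgebra.comul a) = φ a • (1 : A)
  φ_faithful_left : ∀ a : A, (∀ b : A, φ (a * b) = 0) → a = 0
  φ_faithful_right : ∀ a : A, (∀ b : A, φ (b * a) = 0) → a = 0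
  antipode_bijective : Function.Bijective (HopfAlgebra.antipode (R := k) (A := A))
  α : X →ₐ[k] X ⊗[k] A
  coassoc : ∀ x : X,
    TensorProduct.assoc k X A A ((LinearMap.rTensor A α.toLinearMap) (α x))
      = LinearMap.lTensor X (Coalgebra.comul (R := k) (A := A)) (α x)
  counit_id : ∀ x : X,
    applySnd k (Coalgebra.counit (R := k) (A := A)) (α x) = x
  coinv_trivial : ∀ x : X, α x = x ⊗ₜ[k] (1 : A) → ∃ c : k, x = c • (1 : X)
  galois : Function.Bijective (galoisV k A X α)

variable {k A X}

/-- The Galois map as a linear equivalence. -/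
def GaloisContext.V (G : GaloisContext k A X) : (X ⊗[k] X) ≃ₗ[k] (X ⊗[k] A) :=
  LinearEquiv.ofBijective (galoisV k A X G.α) G.galois

/-- The map `β : A → X ⊗ X`, `a ↦ V⁻¹(1 ⊗ a)`. -/
def GaloisContext.β (G : GaloisContext k A X) : A →ₗ[k] X ⊗[k] X :=
  G.V.symm.toLinearMap ∘ₗ TensorProduct.mk k X A 1

end

/-!
Slicing with the integrals turns identities in `X ⊗ A` into identities in `A`. Since
`(φ_X ⊗ id) ∘ α = φ_X(·) δ`, both `α(x) α(δ_X)` and `α(x) (δ_X ⊗ δ)` slice to `ψ_X(x) δ`; the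
elements `(1 ⊗ a) α(x)` span `X ⊗ A` (an explicit preimage uses `S⁻¹`) and `φ_X` is faithful
(through `β` it inherits faithfulness from `φ`), so `α(δ_X) = δ_X ⊗ δ`, and then
`V(δ_X⁻¹ ⊗ δ_X) = 1 ⊗ δ`. Finally, slicing `α(z)` with `φ(δ ·)` (computed through `β(δ)`) and
with `φ(· δ)` (computed through `α(δ_X)`), the relation `φ(c δ) = τ φ(δ c)`, which comes from
`φ ∘ S = φ(· δ)` and `φ(δ S(·)) = φ`, gives `φ_X(z δ_X) = τ φ_X(δ_X z)`, i.e.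
`σ_X(δ_X) = τ⁻¹ δ_X`.
-/

open HopfAlgebra Coalgebra

section Slice

variable {k : Type*} [Field k]

section Module

variable {M N : Type*} [AddCommGroup M] [Module k M] [AddCommGroup N] [Module k N]

@[simp] lemma applySnd_tmul (f : N →ₗ[k] k) (m : M) (n : N) :
    applySnd k f (m ⊗ₜ n) = f n • m := by
  simp [applySnd]

@[simp] lemma applyFst_tmul (f : M →ₗ[k] k) (m : M) (n : N) :
    applyFst k f (m ⊗ₜ n) = f m • n := by
  simp [applyFst]

lemma apply_applyFst_eq_apply_applySnd (f : M →ₗ[k] k) (g : N →ₗ[k] k) (w : M ⊗[k] N) :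
    g (applyFst k f w) = f (applySnd k g w) := by
  induction w using TensorProduct.induction_on with
  | zero => simp
  | tmul m n => simp [mul_comm]
  | add x y hx hy => simp [hx, hy]

lemma applySnd_lTensor (f : N →ₗ[k] k) (g : N →ₗ[k] N) (w : M ⊗[k] N) :
    applySnd k f (g.lTensor M w) = applySnd k (f ∘ₗ g) w := by
  simp [applySnd, LinearMap.lTensor_comp_apply]

lemma applyFst_comm (f : M →ₗ[k] k) (w : M ⊗[k] N) :
    applyFst k f w = applySnd k f (TensorProduct.comm k M N w) := by
  induction w using TensorProduct.induction_on with
  | zero => simp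
  | tmul m n => simp
  | add x y hx hy => simp [hx, hy]

lemma eq_zero_of_forall_applySnd_eq_zero {w : M ⊗[k] N}
    (h : ∀ f : N →ₗ[k] k, applySnd k f w = 0) : w = 0 := by
  classical
  let b := Module.Basis.ofVectorSpace k N
  have coord : ∀ j, applySnd k (b.coord j) = Finsupp.lapply (R := k) (M := M) j ∘ₗ
      (TensorProduct.equivFinsuppOfBasisRight b).toLinearMap := by
    intro j
    ext m n
    simp
  apply (TensorProduct.equivFinsuppOfBasisRight b).injective
  ext j
  simpa [coord] using h (b.coord j)

lemma eq_zero_of_forall_applyFst_eq_zero {w : M ⊗[k] N}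
    (h : ∀ f : M →ₗ[k] k, applyFst k f w = 0) : w = 0 := by
  refine (TensorProduct.comm k M N).map_eq_zero_iff.1 (eq_zero_of_forall_applySnd_eq_zero ?_)
  simpa [applyFst_comm] using h

end Module

section Algebra

variable {B C : Type*} [Ring B] [Algebra k B] [Ring C] [Algebra k C]

lemma applySnd_tmul_one_mul (f : C →ₗ[k] k) (b : B) (w : B ⊗[k] C) :
    applySnd k f ((b ⊗ₜ 1) * w) = b * applySnd k f w := by
  induction w using TensorProduct.induction_on with
  | zero => simp
  | tmul u v => simp [Algebra.TensorProduct.tmul_mul_tmul]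
  | add x y hx hy => simp [mul_add, hx, hy]

lemma applySnd_mul_tmul_one (f : C →ₗ[k] k) (b : B) (w : B ⊗[k] C) :
    applySnd k f (w * (b ⊗ₜ 1)) = applySnd k f w * b := by
  induction w using TensorProduct.induction_on with
  | zero => simp
  | tmul u v => simp [Algebra.TensorProduct.tmul_mul_tmul]
  | add x y hx hy => simp [add_mul, hx, hy]

lemma applySnd_one_tmul_mul (f : C →ₗ[k] k) (c : C) (w : B ⊗[k] C) :
    applySnd k f (((1 : B) ⊗ₜ c) * w) = applySnd k (f ∘ₗ LinearMap.mulLeft k c) w := by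
  induction w using TensorProduct.induction_on with
  | zero => simp
  | tmul u v => simp [Algebra.TensorProduct.tmul_mul_tmul]
  | add x y hx hy => simp [mul_add, hx, hy]

lemma applySnd_mul_one_tmul (f : C →ₗ[k] k) (c : C) (w : B ⊗[k] C) :
    applySnd k f (w * ((1 : B) ⊗ₜ c)) = applySnd k (f ∘ₗ LinearMap.mulRight k c) w := by
  induction w using TensorProduct.induction_on with
  | zero => simp
  | tmul u v => simp [Algebra.TensorProduct.tmul_mul_tmul]
  | add x y hx hy => simp [add_mul, hx, hy]

lemma applyFst_one_tmul_mul (f : B →ₗ[k] k) (c : C) (w : B ⊗[k] C) :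
    applyFst k f (((1 : B) ⊗ₜ c) * w) = c * applyFst k f w := by
  induction w using TensorProduct.induction_on with
  | zero => simp
  | tmul u v => simp [Algebra.TensorProduct.tmul_mul_tmul]
  | add x y hx hy => simp [mul_add, hx, hy]

lemma applyFst_tmul_one_mul (f : B →ₗ[k] k) (b : B) (w : B ⊗[k] C) :
    applyFst k f ((b ⊗ₜ (1 : C)) * w) = applyFst k (f ∘ₗ LinearMap.mulLeft k b) w := by
  induction w using TensorProduct.induction_on with
  | zero => simp
  | tmul u v => simp [Algebra.TensorProduct.tmul_mul_tmul]
  | add x y hx hy => simp [mul_add, hx, hy]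

lemma applyFst_mul_tmul (f : B →ₗ[k] k) (b : B) (c : C) (w : B ⊗[k] C) :
    applyFst k f (w * (b ⊗ₜ c)) = applyFst k (f ∘ₗ LinearMap.mulRight k b) w * c := by
  induction w using TensorProduct.induction_on with
  | zero => simp
  | tmul u v => simp [Algebra.TensorProduct.tmul_mul_tmul]
  | add x y hx hy => simp [add_mul, hx, hy]

lemma applyFst_mul_one_tmul (f : B →ₗ[k] k) (c : C) (w : B ⊗[k] C) :
    applyFst k f (w * ((1 : B) ⊗ₜ c)) = applyFst k f w * c := by
  induction w using TensorProduct.induction_on with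
  | zero => simp
  | tmul u v => simp [Algebra.TensorProduct.tmul_mul_tmul]
  | add x y hx hy => simp [add_mul, hx, hy]

end Algebra

end Slice

lemma sum_counit_right_smul {R C ι : Type*} [CommSemiring R] [AddCommMonoid C]
    [Module R C] [Coalgebra R C] {c : C} (r : Repr R c ι) :
    ∑ i ∈ r.index, counit (R := R) (r.right i) • r.left i = c := by
  simpa only [map_sum, TensorProduct.rid_tmul, one_smul] using
    congrArg (TensorProduct.rid R C) (sum_tmul_counit_eq r)

section Integral

variable {k A : Type*} [Field k] [Ring A] [HopfAlgebra k A]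

lemma sum_antipode_tmul_one_mul_comul {ι : Type*} {a : A} (r : Repr k a ι) :
    ∑ i ∈ r.index, (antipode k (r.left i) ⊗ₜ[k] (1 : A)) * comul (r.right i) = 1 ⊗ₜ a := by
  let κ : A ⊗[k] (A ⊗[k] A) →ₗ[k] A ⊗[k] A :=
    (LinearMap.mul' k A ∘ₗ (antipode k).rTensor A).rTensor A ∘ₗ
      (TensorProduct.assoc k A A A).symm.toLinearMap
  have hκ : ∀ u v w : A, κ (u ⊗ₜ (v ⊗ₜ w)) = (antipode k u * v) ⊗ₜ w := by simp [κ]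
  have key := congrArg κ (sum_tmul_tmul_eq r (fun i => ℛ k (r.left i)) (fun i => ℛ k (r.right i)))
  simp only [map_sum, hκ] at key
  simp only [← TensorProduct.sum_tmul, sum_antipode_mul_eq_smul, TensorProduct.smul_tmul,
    ← TensorProduct.tmul_sum, sum_counit_smul] at key
  rw [key]
  refine Finset.sum_congr rfl fun i _ => ?_
  simp [← (ℛ k (r.right i)).eq, Finset.mul_sum, Algebra.TensorProduct.tmul_mul_tmul]

lemma sum_comul_mul_one_tmul_antipode {ι : Type*} {a : A} (r : Repr k a ι) :
    ∑ i ∈ r.index, comul (r.left i) * ((1 : A) ⊗ₜ[k] antipode k (r.right i)) = a ⊗ₜ 1 := by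
  let κ : A ⊗[k] (A ⊗[k] A) →ₗ[k] A ⊗[k] A :=
    (LinearMap.mul' k A ∘ₗ (antipode k).lTensor A).lTensor A
  have hκ : ∀ u v w : A, κ (u ⊗ₜ (v ⊗ₜ w)) = u ⊗ₜ (v * antipode k w) := by simp [κ]
  have key := congrArg κ (sum_tmul_tmul_eq r (fun i => ℛ k (r.left i)) (fun i => ℛ k (r.right i)))
  simp only [map_sum, hκ] at key
  simp only [← TensorProduct.tmul_sum, sum_mul_antipode_eq_smul, ← TensorProduct.smul_tmul,
    ← TensorProduct.sum_tmul, sum_counit_right_smul] at key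
  rw [← key]
  refine Finset.sum_congr rfl fun i _ => ?_
  simp [← (ℛ k (r.left i)).eq, Finset.sum_mul, Algebra.TensorProduct.tmul_mul_tmul]

variable {φ : A →ₗ[k] k} {d : A}

lemma applySnd_comp_mulLeft_comul (hφ : ∀ c : A, applySnd k φ (comul c) = φ c • 1)
    {ι : Type*} {a : A} (r : Repr k a ι) (b : A) :
    applySnd k (φ ∘ₗ LinearMap.mulLeft k a) (comul b)
      = ∑ i ∈ r.index, φ (r.right i * b) • antipode k (r.left i) := by
  rw [← applySnd_one_tmul_mul, ← sum_antipode_tmul_one_mul_comul r, Finset.sum_mul, map_sum]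
  refine Finset.sum_congr rfl fun i _ => ?_
  rw [mul_assoc, ← Bialgebra.comul_mul, applySnd_tmul_one_mul, hφ, mul_smul_comm, mul_one]

lemma applyFst_comp_mulRight_comul (hd : ∀ c : A, applyFst k φ (comul c) = φ c • d)
    {ι : Type*} {a : A} (r : Repr k a ι) (b : A) :
    applyFst k (φ ∘ₗ LinearMap.mulRight k a) (comul b)
      = ∑ i ∈ r.index, φ (b * r.left i) • (d * antipode k (r.right i)) := by
  rw [← mul_one (applyFst k _ _), ← applyFst_mul_tmul, ← sum_comul_mul_one_tmul_antipode r,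
    Finset.mul_sum, map_sum]
  refine Finset.sum_congr rfl fun i _ => ?_
  rw [← mul_assoc, ← Bialgebra.comul_mul, applyFst_mul_one_tmul, hd, smul_mul_assoc]

lemma integral_antipode (hφ : ∀ c : A, applySnd k φ (comul c) = φ c • 1)
    (hd : ∀ c : A, applyFst k φ (comul c) = φ c • d)
    (hφl : ∀ a : A, (∀ b : A, φ (a * b) = 0) → a = 0) (a : A) :
    φ (antipode k a) = φ (a * d) := by
  let r := ℛ k a
  let E := ∑ i ∈ r.index, φ (antipode k (r.left i)) • r.right i
  have hE : ∀ b, φ (E * b) = φ (a * d) * φ b := fun b => calc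
    φ (E * b) = φ (∑ i ∈ r.index, φ (r.right i * b) • antipode k (r.left i)) := by
      simp [E, Finset.sum_mul, mul_comm]
    _ = φ (a * applyFst k φ (comul b)) := by
      rw [← applySnd_comp_mulLeft_comul hφ r, ← apply_applyFst_eq_apply_applySnd]; rfl
    _ = φ (a * d) * φ b := by rw [hd, mul_smul_comm, map_smul, smul_eq_mul, mul_comm]
  have hE1 : E = φ (a * d) • 1 :=
    sub_eq_zero.1 (hφl _ fun b => by simp [sub_mul, hE, mul_comm])
  calc φ (antipode k a) = counit (R := k) E := by
        conv_lhs => rw [← sum_counit_right_smul r]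
        simp [E, mul_comm]
    _ = φ (a * d) := by simp [hE1]

lemma integral_modular_mul_antipode (hφ : ∀ c : A, applySnd k φ (comul c) = φ c • 1)
    (hd : ∀ c : A, applyFst k φ (comul c) = φ c • d)
    (hφr : ∀ a : A, (∀ b : A, φ (b * a) = 0) → a = 0) (a : A) :
    φ (d * antipode k a) = φ a := by
  let r := ℛ k a
  let F := ∑ i ∈ r.index, φ (d * antipode k (r.right i)) • r.left i
  have hF : ∀ b, φ (b * F) = φ a * φ b := fun b => calc
    φ (b * F) = φ (∑ i ∈ r.index, φ (b * r.left i) • (d * antipode k (r.right i))) := by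
      simp [F, Finset.mul_sum, mul_comm]
    _ = φ (applySnd k φ (comul b) * a) := by
      rw [← applyFst_comp_mulRight_comul hd r, apply_applyFst_eq_apply_applySnd]; rfl
    _ = φ a * φ b := by rw [hφ, smul_mul_assoc, one_mul, map_smul, smul_eq_mul, mul_comm]
  have hF1 : F = φ a • 1 :=
    sub_eq_zero.1 (hφr _ fun b => by simp [mul_sub, hF])
  calc φ (d * antipode k a) = counit (R := k) F := by
        conv_lhs => rw [← sum_counit_smul r]
        simp [F, Finset.mul_sum, mul_comm]
    _ = φ a := by simp [hF1]

lemma integral_mul_modular (hS : Function.Surjective (antipode k (A := A)))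
    (hφ : ∀ c : A, applySnd k φ (comul c) = φ c • 1)
    (hd : ∀ c : A, applyFst k φ (comul c) = φ c • d)
    (hφl : ∀ a : A, (∀ b : A, φ (a * b) = 0) → a = 0)
    (hφr : ∀ a : A, (∀ b : A, φ (b * a) = 0) → a = 0)
    {τ : k} (hτ : ∀ a : A, φ (antipode k (antipode k a)) = τ * φ a) (c : A) :
    φ (c * d) = τ * φ (d * c) := by
  obtain ⟨c, rfl⟩ := hS c
  rw [← integral_antipode hφ hd hφl, hτ, integral_modular_mul_antipode hφ hd hφr]

lemma sum_antipode_symm_mul (hS : Function.Bijective (antipode k (A := A)))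
    {ι : Type*} {b : A} (r : Repr k b ι) :
    ∑ i ∈ r.index, (LinearEquiv.ofBijective _ hS).symm (r.right i) * r.left i
      = counit (R := k) b • 1 := by
  apply hS.injective
  simp [map_sum, antipode_mul_antidistrib, sum_antipode_mul_eq_smul]

end Integral

section Galois

variable {k A X : Type*} [Field k] [Ring A] [HopfAlgebra k A] [Ring X] [Algebra k X]

@[simp] lemma galoisV_tmul (α : X →ₐ[k] X ⊗[k] A) (x y : X) :
    galoisV k A X α (x ⊗ₜ y) = (x ⊗ₜ 1) * α y := by
  simp [galoisV]

lemma galoisV_mul_apply (α : X →ₐ[k] X ⊗[k] A) (t : X ⊗[k] X) (z : X) :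
    galoisV k A X α t * α z = galoisV k A X α ((LinearMap.mulRight k z).lTensor X t) := by
  induction t using TensorProduct.induction_on with
  | zero => simp
  | tmul x y => simp [mul_assoc]
  | add u v hu hv => simp [add_mul, hu, hv]

namespace GaloisContext

variable (G : GaloisContext k A X)

lemma galoisV_β (a : A) : galoisV k A X G.α (G.β a) = 1 ⊗ₜ a :=
  G.V.apply_symm_apply _

lemma α_injective : Function.Injective G.α := fun x y h => by
  rw [← G.counit_id x, ← G.counit_id y, h]

lemma β_eq_of_α_eq {d : A} {u : Xˣ} (h : G.α u = (u : X) ⊗ₜ d) : G.β d = ↑u⁻¹ ⊗ₜ ↑u := by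
  refine G.V.symm_apply_eq.2 ?_
  change 1 ⊗ₜ d = galoisV k A X G.α _
  rw [galoisV_tmul, h, Algebra.TensorProduct.tmul_mul_tmul, Units.inv_mul, one_mul]

/-- The companion `x ⊗ a ↦ (1 ⊗ a) α(x)` of the Galois map; it is onto because `S` is bijective. -/
def galoisW : X ⊗[k] A →ₗ[k] X ⊗[k] A :=
  LinearMap.mul' k (X ⊗[k] A) ∘ₗ TensorProduct.map (TensorProduct.mk k X A 1) G.α.toLinearMap ∘ₗ
    (TensorProduct.comm k X A).toLinearMap

@[simp] lemma galoisW_tmul (x : X) (a : A) : G.galoisW (x ⊗ₜ a) = (1 ⊗ₜ a) * G.α x := by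
  simp [galoisW]

lemma galoisW_one_tmul_mul (a : A) (w : X ⊗[k] A) :
    G.galoisW ((1 ⊗ₜ a) * w) = (1 ⊗ₜ a) * G.galoisW w := by
  induction w using TensorProduct.induction_on with
  | zero => simp
  | tmul y c => simp [← mul_assoc, Algebra.TensorProduct.tmul_mul_tmul]
  | add u v hu hv => simp [mul_add, hu, hv]

lemma galoisW_lTensor_antipode_symm_α (x : X) :
    G.galoisW (((LinearEquiv.ofBijective _ G.antipode_bijective).symm.toLinearMap.lTensor X)
      (G.α x)) = x ⊗ₜ 1 := by
  let Sinv := (LinearEquiv.ofBijective _ G.antipode_bijective).symm.toLinearMap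
  let J : (X ⊗[k] A) ⊗[k] A →ₗ[k] X ⊗[k] A :=
    LinearMap.mul' k (X ⊗[k] A) ∘ₗ TensorProduct.map (TensorProduct.mk k X A 1 ∘ₗ Sinv) .id ∘ₗ
      (TensorProduct.comm k (X ⊗[k] A) A).toLinearMap
  have hJ : G.galoisW ∘ₗ Sinv.lTensor X = J ∘ₗ G.α.toLinearMap.rTensor A := by
    ext y c
    simp [J, Sinv]
  let ρ : A ⊗[k] A →ₗ[k] A :=
    LinearMap.mul' k A ∘ₗ TensorProduct.map Sinv .id ∘ₗ (TensorProduct.comm k A A).toLinearMap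
  have hJρ : J ∘ₗ (TensorProduct.assoc k X A A).symm.toLinearMap = ρ.lTensor X := by
    ext y c₁ c₂
    simp [J, ρ, Algebra.TensorProduct.tmul_mul_tmul]
  have hρ : ρ ∘ₗ comul = Algebra.linearMap k A ∘ₗ counit := by
    ext c
    simp [ρ, Sinv, ← (ℛ k c).eq, sum_antipode_symm_mul, Algebra.algebraMap_eq_smul_one]
  have hε : (counit (R := k) (A := A)).lTensor X (G.α x) = x ⊗ₜ 1 :=
    (TensorProduct.rid k X).injective (by simpa [applySnd] using G.counit_id x)
  calc G.galoisW (Sinv.lTensor X (G.α x)) = J (G.α.toLinearMap.rTensor A (G.α x)) :=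
        LinearMap.congr_fun hJ _
    _ = J ((TensorProduct.assoc k X A A).symm (comul.lTensor X (G.α x))) := by
        rw [← G.coassoc x, LinearEquiv.symm_apply_apply]
    _ = (ρ ∘ₗ comul).lTensor X (G.α x) := by
        rw [LinearMap.lTensor_comp_apply, ← hJρ]
        rfl
    _ = x ⊗ₜ 1 := by simp [hρ, LinearMap.lTensor_comp_apply, hε]

lemma galoisW_surjective : Function.Surjective G.galoisW := by
  intro u
  induction u using TensorProduct.induction_on with
  | zero => exact ⟨0, map_zero _⟩
  | tmul x a =>
    refine ⟨(1 ⊗ₜ a) * ((LinearEquiv.ofBijective _ G.antipode_bijective).symm.toLinearMap.lTensor X)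
      (G.α x), ?_⟩
    rw [galoisW_one_tmul_mul, galoisW_lTensor_antipode_symm_α, Algebra.TensorProduct.tmul_mul_tmul,
      one_mul, mul_one]
  | add u v hu hv =>
    obtain ⟨p, rfl⟩ := hu
    obtain ⟨q, rfl⟩ := hv
    exact ⟨p + q, map_add _ _ _⟩

variable {φX : X →ₗ[k] k} (hφX : ∀ x : X, applySnd k G.φ (G.α x) = φX x • 1)
include hφX

lemma applySnd_galoisV (t : X ⊗[k] X) :
    applySnd k G.φ (galoisV k A X G.α t) = applySnd k φX t := by
  induction t using TensorProduct.induction_on with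
  | zero => simp
  | tmul x y => simp [applySnd_tmul_one_mul, hφX]
  | add u v hu hv => simp [hu, hv]

lemma applySnd_comp_mulLeft_α (a : A) (z : X) :
    applySnd k (G.φ ∘ₗ LinearMap.mulLeft k a) (G.α z)
      = applySnd k (φX ∘ₗ LinearMap.mulRight k z) (G.β a) := by
  rw [← applySnd_one_tmul_mul, ← G.galoisV_β, galoisV_mul_apply, G.applySnd_galoisV hφX,
    applySnd_lTensor]

lemma applyFst_α [Nontrivial X] {d : A} (hd : ∀ a : A, applyFst k G.φ (comul a) = G.φ a • d)
    (x : X) : applyFst k φX (G.α x) = φX x • d := by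
  let Φ : X ⊗[k] (A ⊗[k] A) →ₗ[k] X ⊗[k] A := (applyFst k G.φ).lTensor X
  have hΦ : ∀ (w : X ⊗[k] A) (c : A),
      Φ (TensorProduct.assoc k X A A (w ⊗ₜ c)) = applySnd k G.φ w ⊗ₜ c := by
    intro w c
    induction w using TensorProduct.induction_on with
    | zero => simp
    | tmul y a => simp [Φ, TensorProduct.smul_tmul]
    | add u v hu hv => simp [TensorProduct.add_tmul, hu, hv]
  have lhs : ∀ u : X ⊗[k] A, Φ (TensorProduct.assoc k X A A (G.α.toLinearMap.rTensor A u))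
      = 1 ⊗ₜ applyFst k φX u := by
    intro u
    induction u using TensorProduct.induction_on with
    | zero => simp
    | tmul y c => simp [hΦ, hφX, TensorProduct.smul_tmul]
    | add u v hu hv => simp [TensorProduct.tmul_add, hu, hv]
  have rhs : ∀ u : X ⊗[k] A, Φ (comul.lTensor X u) = applySnd k G.φ u ⊗ₜ d := by
    intro u
    induction u using TensorProduct.induction_on with
    | zero => simp
    | tmul y a => simp [Φ, hd, TensorProduct.smul_tmul]
    | add u v hu hv => simp [TensorProduct.add_tmul, hu, hv]
  have h := (lhs (G.α x)).symm.trans ((congrArg Φ (G.coassoc x)).trans (rhs (G.α x)))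
  rw [hφX, TensorProduct.smul_tmul, ← sub_eq_zero, ← TensorProduct.tmul_sub] at h
  exact sub_eq_zero.1 ((Module.FaithfullyFlat.one_tmul_eq_zero_iff k A _).1 h)

lemma eq_zero_of_forall_φX_mul_eq_zero {t : X} (h : ∀ y : X, φX (y * t) = 0) : t = 0 := by
  have hα : ∀ a : A, applySnd k (G.φ ∘ₗ LinearMap.mulLeft k a) (G.α t) = 0 := by
    intro a
    have : φX ∘ₗ LinearMap.mulRight k t = 0 := LinearMap.ext h
    rw [G.applySnd_comp_mulLeft_α hφX, this]
    simp [applySnd]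
  refine G.α_injective ((map_zero G.α).symm ▸ eq_zero_of_forall_applyFst_eq_zero fun f => ?_)
  refine G.φ_faithful_right _ fun a => ?_
  simpa [hα] using apply_applyFst_eq_apply_applySnd f (G.φ ∘ₗ LinearMap.mulLeft k a) (G.α t)

variable [Nontrivial X] {d : A} (hd : ∀ a : A, applyFst k G.φ (comul a) = G.φ a • d)
include hd

lemma α_eq_tmul_modular {ψX : X →ₗ[k] k} (hψX : ∀ x : X, applyFst k ψX (G.α x) = ψX x • 1)
    {δX : X} (hδX : ∀ x : X, φX (x * δX) = ψX x) : G.α δX = δX ⊗ₜ d := by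
  set T := G.α δX - δX ⊗ₜ d
  have hαT : ∀ x : X, applyFst k φX (G.α x * T) = 0 := by
    intro x
    have hψ : φX ∘ₗ LinearMap.mulRight k δX = ψX := LinearMap.ext hδX
    rw [mul_sub, map_sub, ← map_mul, G.applyFst_α hφX hd, hδX, applyFst_mul_tmul, hψ, hψX,
      smul_mul_assoc, one_mul, sub_self]
  have hW : (applyFst k φX ∘ₗ LinearMap.mulRight k T) ∘ₗ G.galoisW = 0 := by
    ext x a
    simp [mul_assoc, applyFst_one_tmul_mul, hαT]
  suffices T = 0 from sub_eq_zero.1 this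
  refine eq_zero_of_forall_applySnd_eq_zero fun f => ?_
  refine G.eq_zero_of_forall_φX_mul_eq_zero hφX fun y => ?_
  obtain ⟨w, hw⟩ := G.galoisW_surjective (y ⊗ₜ 1)
  have := LinearMap.congr_fun hW w
  simp only [LinearMap.comp_apply, LinearMap.mulRight_apply, hw, applyFst_tmul_one_mul] at this
  simpa [this] using (apply_applyFst_eq_apply_applySnd (φX ∘ₗ LinearMap.mulLeft k y) f T).symm

lemma φX_mul_modular {τ : k} (hτ : ∀ a : A, G.φ (antipode k (antipode k a)) = τ * G.φ a)
    {u : Xˣ} (hα : G.α u = (u : X) ⊗ₜ d) (z : X) : φX (z * u) = τ * φX (u * z) := by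
  have hl : applySnd k (G.φ ∘ₗ LinearMap.mulLeft k d) (G.α z) = φX (u * z) • ↑u⁻¹ := by
    simp [G.applySnd_comp_mulLeft_α hφX, G.β_eq_of_α_eq hα]
  have hr : applySnd k (G.φ ∘ₗ LinearMap.mulRight k d) (G.α z) = φX (z * u) • ↑u⁻¹ := by
    have hd1 : (1 : X) ⊗ₜ d = G.α u * (((u⁻¹ : Xˣ) : X) ⊗ₜ 1) := by
      rw [hα, Algebra.TensorProduct.tmul_mul_tmul, Units.mul_inv, mul_one]
    rw [← applySnd_mul_one_tmul, hd1, ← mul_assoc, ← map_mul, applySnd_mul_tmul_one, hφX,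
      smul_mul_assoc, one_mul]
  have hφd : G.φ ∘ₗ LinearMap.mulRight k d = τ • (G.φ ∘ₗ LinearMap.mulLeft k d) :=
    LinearMap.ext (integral_mul_modular G.antipode_bijective.2 G.φ_integral hd
      G.φ_faithful_left G.φ_faithful_right hτ)
  have hsmul : applySnd k (τ • (G.φ ∘ₗ LinearMap.mulLeft k d)) (G.α z)
      = τ • applySnd k (G.φ ∘ₗ LinearMap.mulLeft k d) (G.α z) := by
    simp [applySnd, LinearMap.lTensor_smul]
  rw [hφd, hsmul, hl, smul_smul] at hr
  exact (smul_left_injective k (Units.ne_zero _) hr).symm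

end GaloisContext

end Galois

theorem galois_object_modular_element_formulas_general
    {k : Type*} [Field k] {A X : Type*} [Ring A] [HopfAlgebra k A]
    [Ring X] [Algebra k X] [Nontrivial X]
    (G : GaloisContext k A X)
    (φX : X →ₗ[k] k)
    (hφX : ∀ x : X, applySnd k G.φ (G.α x) = φX x • (1 : X))
    (ψX : X →ₗ[k] k)
    (hψX : ∀ x : X, applyFst k ψX (G.α x) = ψX x • (1 : A))
    (δX : Xˣ) (hδX : ∀ x : X, φX (x * δX) = ψX x)
    (σX : X ≃ₐ[k] X) (hσX : ∀ x y : X, φX (y * σX x) = φX (x * y))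
    (δ : Aˣ) (hδ : ∀ a : A, applyFst k G.φ (Coalgebra.comul a) = G.φ a • (↑δ : A))
    (τ : k) (hτ_ne : τ ≠ 0)
    (hτ : ∀ a : A, G.φ (HopfAlgebra.antipode (R := k) (A := A)
      (HopfAlgebra.antipode (R := k) (A := A) a)) = τ * G.φ a) :
    G.α ↑δX = (↑δX : X) ⊗ₜ[k] (↑δ : A) ∧
    G.β ↑δ = (↑δX⁻¹ : X) ⊗ₜ[k] (↑δX : X) ∧
    σX ↑δX = τ⁻¹ • (↑δX : X) := by
  have hα := G.α_eq_tmul_modular hφX hδ hψX hδX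
  refine ⟨hα, G.β_eq_of_α_eq hα, sub_eq_zero.1 <| G.eq_zero_of_forall_φX_mul_eq_zero hφX fun y => ?_⟩
  rw [mul_sub, map_sub, hσX, mul_smul_comm, map_smul, G.φX_mul_modular hφX hδ hτ hα, smul_eq_mul,
    inv_mul_cancel_left₀ hτ_ne, sub_self]

theorem galois_object_modular_element_formulas
    {k : Type*} [Field k] {A X : Type*} [Ring A] [HopfAlgebra k A]
    [Ring X] [Algebra k X] [Nontrivial X]
    (G : GaloisContext k A X)
    (φX : X →ₗ[k] k)
    (hφX : ∀ x : X, applySnd k G.φ (G.α x) = φX x • (1 : X))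
    (ψX : X →ₗ[k] k) (hψX_ne : ψX ≠ 0)
    (hψX : ∀ x : X, applyFst k ψX (G.α x) = ψX x • (1 : A))
    (δX : Xˣ) (hδX : ∀ x : X, φX (x * δX) = ψX x)
    (σX : X ≃ₐ[k] X) (hσX : ∀ x y : X, φX (y * σX x) = φX (x * y))
    (δ : Aˣ) (hδ : ∀ a : A, applyFst k G.φ (Coalgebra.comul a) = G.φ a • (↑δ : A))
    (τ : k) (hτ_ne : τ ≠ 0)
    (hτ : ∀ a : A, G.φ (HopfAlgebra.antipode (R := k) (A := A)
      (HopfAlgebra.antipode (R := k) (A := A) a)) = τ * G.φ a) :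
    G.α ↑δX = (↑δX : X) ⊗ₜ[k] (↑δ : A) ∧
    G.β ↑δ = (↑δX⁻¹ : X) ⊗ₜ[k] (↑δX : X) ∧
    σX ↑δX = τ⁻¹ • (↑δX : X) :=
  galois_object_modular_element_formulas_general G φX hφX ψX hψX δX hδX σX hσX δ hδ τ hτ_ne hτ
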